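/- arXiv:1406.4718 — 3 statements merged into one kernel-verified Lean document; each statement's English description precedes it below -/
import Mathlib

section
/- Let G be a finite simple graph and ≤ an elimination order to degree d for G of d-height at most k, and let A be the set of vertices of G that are not ≤-maximal. Then: (1) the restriction of ≤ to A is an elimination order of the induced subgraph G[A], of height at most k; (2) the induced subgraph of G on V(G) ∖ A has maximum degree at most d; and (3) for every connected component of the induced subgraph on V(G) ∖ A with vertex set C, and all ≤-incomparable u, v ∈ A, at least one of E_G(u, C) and E_G(v, C) is empty. -/
/-!
Only maximal vertices can have incomparable neighbours, so `le` restricted to the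
non-maximal vertices `A` is an elimination order, and a vertex of `G − A` sees in
`G − A` only incomparable neighbours, at most `d` of them. Along an edge between two
maximal vertices the sets of strict predecessors agree, hence they are constant on a
component `C` of `G − A`. A vertex of `A` adjacent to `C` is comparable to, hence strictly
below, some vertex of `C`, so it lies in this common set of predecessors; two such
vertices lie below one vertex of `C` and are comparable in the tree order.
-/

open SimpleGraph Set

variable {V : Type*}

/-- The degree of a vertex: the number of its neighbours. -/
noncomputable def gdeg (G : SimpleGraph V) (v : V) : ℕ := (G.neighborSet v).ncard

/-- The degree of `v` inside the vertex set `A`, i.e. its degree in the induced subgraph. -/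
noncomputable def degreeIn (G : SimpleGraph V) (A : Set V) (v : V) : ℕ :=
  (A ∩ G.neighborSet v).ncard

/-- A tree order: a partial order in which the set of predecessors of any
element is linearly ordered. -/
structure IsTreeOrder (le : V → V → Prop) : Prop where
  refl : ∀ a, le a a
  antisymm : ∀ a b, le a b → le b a → a = b
  trans : ∀ a b c, le a b → le b c → le a c
  downLinear : ∀ a b c, le b a → le c a → le b c ∨ le c b

/-- A chain: a set of pairwise comparable elements. -/
def IsChainOf (le : V → V → Prop) (s : Set V) : Prop :=
  ∀ a ∈ s, ∀ b ∈ s, le a b ∨ le b a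

/-- The order has height at most `k`: every chain has at most `k` elements. -/
def HeightLE (le : V → V → Prop) (k : ℕ) : Prop :=
  ∀ s : Set V, IsChainOf le s → s.ncard ≤ k

/-- `v` is a maximal element of the order `le`. -/
def IsLeMaximal (le : V → V → Prop) (v : V) : Prop := ∀ w, le v w → w = v

/-- The order has `d`-height at most `k`: every chain contains at most `k`
non-maximal elements. -/
def DHeightLE (le : V → V → Prop) (k : ℕ) : Prop :=
  ∀ s : Set V, IsChainOf le s → {v ∈ s | ¬ IsLeMaximal le v}.ncard ≤ k

/-- An elimination order for `G`: a tree order in which the endpoints of each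
edge are comparable. -/
def IsElimOrder (G : SimpleGraph V) (le : V → V → Prop) : Prop :=
  IsTreeOrder le ∧ ∀ u v, G.Adj u v → le u v ∨ le v u

/-- The set `S_v` of neighbours of `v` that are incomparable to `v`. -/
def Sset (G : SimpleGraph V) (le : V → V → Prop) (v : V) : Set V :=
  {u | G.Adj u v ∧ ¬ le u v ∧ ¬ le v u}

/-- An elimination order to degree `d` for `G`. -/
def IsElimOrderToDeg (G : SimpleGraph V) (d : ℕ) (le : V → V → Prop) : Prop :=
  IsTreeOrder le ∧ ∀ v : V, Sset G le v = ∅ ∨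
    (IsLeMaximal le v ∧ (Sset G le v).ncard ≤ d ∧
      ∀ u ∈ Sset G le v, {w | le w u ∧ w ≠ u} = {w | le w v ∧ w ≠ v})

/-- `C` is the vertex set of a connected component of the induced subgraph `G[B]`:
a maximal connected subset of `B`. -/
def IsCompOf (G : SimpleGraph V) (B C : Set V) : Prop :=
  C.Nonempty ∧ C ⊆ B ∧ (G.induce C).Connected ∧
    ∀ C', C ⊆ C' → C' ⊆ B → (G.induce C').Connected → C' = C

/-- `TdLE G A k` says that the tree-depth of the induced subgraph `G[A]` is at
most `k`, following the recursive definition of tree-depth. -/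
inductive TdLE (G : SimpleGraph V) : Set V → ℕ → Prop
  | empty (k : ℕ) : TdLE G ∅ k
  | conn (A : Set V) (k : ℕ) (hc : (G.induce A).Connected) (v : V) (hv : v ∈ A)
      (h : TdLE G (A \ {v}) k) : TdLE G A (k + 1)
  | disconn (A : Set V) (k : ℕ) (hne : A.Nonempty) (hc : ¬ (G.induce A).Connected)
      (h : ∀ C, IsCompOf G A C → TdLE G C k) : TdLE G A k

/-- `EdLE G d A k` says that the elimination distance to degree `d` of the
induced subgraph `G[A]` is at most `k`, following the recursive definition. -/
inductive EdLE (G : SimpleGraph V) (d : ℕ) : Set V → ℕ → Prop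
  | base (A : Set V) (k : ℕ) (h : ∀ v ∈ A, degreeIn G A v ≤ d) : EdLE G d A k
  | conn (A : Set V) (k : ℕ) (hd : ¬ ∀ v ∈ A, degreeIn G A v ≤ d)
      (hc : (G.induce A).Connected) (v : V) (hv : v ∈ A)
      (h : EdLE G d (A \ {v}) k) : EdLE G d A (k + 1)
  | disconn (A : Set V) (k : ℕ) (hd : ¬ ∀ v ∈ A, degreeIn G A v ≤ d)
      (hc : ¬ (G.induce A).Connected)
      (h : ∀ C, IsCompOf G A C → EdLE G d C k) : EdLE G d A k

/-- The `m`-degree torso of `G`: the graph on the vertices of degree greater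
than `m`, where two such vertices are adjacent if some path of `G` between them
has all its internal vertices of degree at most `m`. -/
def ATorso (G : SimpleGraph V) (m : ℕ) : SimpleGraph {v : V // m < gdeg G v} where
  Adj u v := u ≠ v ∧ ∃ p : G.Walk u.1 v.1, p.IsPath ∧
      ∀ w ∈ p.support, w ≠ u.1 → w ≠ v.1 → gdeg G w ≤ m
  symm := by
    constructor
    rintro u v ⟨hne, p, hp, hsup⟩
    refine ⟨hne.symm, p.reverse, hp.reverse, fun w hw h1 h2 => ?_⟩
    rw [SimpleGraph.Walk.support_reverse, List.mem_reverse] at hw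
    exact hsup w hw h2 h1
  loopless := by constructor; rintro u ⟨hne, -⟩; exact hne rfl

section

variable {W : Type*} {G : SimpleGraph V} {d k : ℕ} {le : V → V → Prop}

def strictPred (le : V → V → Prop) (v : V) : Set V := {w | le w v ∧ w ≠ v}

theorem IsTreeOrder.comap (h : IsTreeOrder le) {f : W → V} (hf : Function.Injective f) :
    IsTreeOrder (fun a b => le (f a) (f b)) where
  refl _ := h.refl _
  antisymm _ _ hab hba := hf (h.antisymm _ _ hab hba)
  trans _ _ _ := h.trans _ _ _
  downLinear _ _ _ := h.downLinear _ _ _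

theorem DHeightLE.heightLE_subtype (hht : DHeightLE le k) {A : Set V}
    (hA : ∀ a ∈ A, ¬ IsLeMaximal le a) : HeightLE (fun a b : A => le a.1 b.1) k := by
  intro s hs
  have hchain : IsChainOf le (Subtype.val '' s) := by
    rintro _ ⟨a, ha, rfl⟩ _ ⟨b, hb, rfl⟩
    exact hs a ha b hb
  have hnonmax : {v ∈ Subtype.val '' s | ¬ IsLeMaximal le v} = Subtype.val '' s :=
    sep_eq_self_iff_mem_true.mpr (by rintro _ ⟨a, -, rfl⟩; exact hA a a.2)
  have := hht _ hchain
  rwa [hnonmax, ncard_image_of_injective s Subtype.val_injective] at this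

theorem mem_sset_of_adj_of_isLeMaximal {u v : V} (huv : G.Adj u v)
    (hu : IsLeMaximal le u) (hv : IsLeMaximal le v) : u ∈ Sset G le v :=
  ⟨huv, fun h => huv.ne.symm (hu v h), fun h => huv.ne (hv u h)⟩

namespace IsElimOrderToDeg

variable (hle : IsElimOrderToDeg G d le)
include hle

theorem sset_eq_empty {v : V} (hv : ¬ IsLeMaximal le v) : Sset G le v = ∅ :=
  (hle.2 v).resolve_right fun h => hv h.1

theorem le_or_le_of_adj {u v : V} (huv : G.Adj u v) (hv : ¬ IsLeMaximal le v) :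
    le u v ∨ le v u := by
  by_contra! h
  have hu : u ∈ Sset G le v := ⟨huv, h.1, h.2⟩
  simp [hle.sset_eq_empty hv] at hu

theorem isElimOrder_induce {A : Set V} (hA : ∀ a ∈ A, ¬ IsLeMaximal le a) :
    IsElimOrder (G.induce A) (fun a b : A => le a.1 b.1) :=
  ⟨hle.1.comap Subtype.val_injective, fun _ v huv => hle.le_or_le_of_adj huv (hA v v.2)⟩

theorem degreeIn_le [Finite V] {B : Set V} (hB : ∀ u ∈ B, IsLeMaximal le u) {v : V}
    (hv : IsLeMaximal le v) : degreeIn G B v ≤ d := by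
  have hsub : B ∩ G.neighborSet v ⊆ Sset G le v := fun u ⟨hu, hvu⟩ =>
    mem_sset_of_adj_of_isLeMaximal hvu.symm (hB u hu) hv
  rcases hle.2 v with hempty | ⟨-, hcard, -⟩
  · rw [hempty, subset_empty_iff] at hsub
    simp [degreeIn, hsub]
  · exact (ncard_le_ncard hsub (toFinite _)).trans hcard

theorem strictPred_eq_of_adj {u v : V} (huv : G.Adj u v)
    (hu : IsLeMaximal le u) (hv : IsLeMaximal le v) : strictPred le u = strictPred le v := by
  rcases hle.2 v with hempty | ⟨-, -, hpred⟩
  · simpa [hempty] using mem_sset_of_adj_of_isLeMaximal huv hu hv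
  · exact hpred u (mem_sset_of_adj_of_isLeMaximal huv hu hv)

theorem strictPred_eq_of_reachable {C : Set V} (hC : ∀ c ∈ C, IsLeMaximal le c)
    {a b : C} (hab : (G.induce C).Reachable a b) : strictPred le a = strictPred le b := by
  obtain ⟨p⟩ := hab
  induction p with
  | nil => rfl
  | cons hac _ ih => exact (hle.strictPred_eq_of_adj hac (hC _ (Subtype.property _))
      (hC _ (Subtype.property _))).trans ih

theorem mem_strictPred_of_adj {w c : V} (hwc : G.Adj w c) (hw : ¬ IsLeMaximal le w)
    (hc : IsLeMaximal le c) : w ∈ strictPred le c :=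
  ⟨(hle.le_or_le_of_adj hwc.symm hw).resolve_left fun h => hwc.ne (hc w h), hwc.ne⟩

theorem le_or_le_of_adj_connected {C : Set V} (hC : ∀ c ∈ C, IsLeMaximal le c)
    (hconn : (G.induce C).Connected) {u v x y : V} (hx : x ∈ C) (hy : y ∈ C)
    (hux : G.Adj u x) (hvy : G.Adj v y) (hu : ¬ IsLeMaximal le u)
    (hv : ¬ IsLeMaximal le v) : le u v ∨ le v u := by
  have hvx : v ∈ strictPred le x := by
    rw [← hle.strictPred_eq_of_reachable hC (hconn ⟨y, hy⟩ ⟨x, hx⟩)]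
    exact hle.mem_strictPred_of_adj hvy hv (hC y hy)
  exact hle.1.downLinear x u v (hle.mem_strictPred_of_adj hux hu (hC x hx)).1 hvx.1

end IsElimOrderToDeg

end

/-- If `le` is an elimination order to degree `d` for `G` of `d`-height at most `k`
and `A` is the set of non-maximal vertices, then (1) the restriction of `le` to `A`
is an elimination order of `G[A]` of height at most `k`; (2) `G − A` has maximum
degree at most `d`; (3) for each component `C` of `G − A` and incomparable
`u, v ∈ A`, one of `E_G(u, C)`, `E_G(v, C)` is empty. -/
theorem nonmaximal_part_of_elimOrderToDeg {V : Type*} [Fintype V] (G : SimpleGraph V)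
    (d k : ℕ) (le : V → V → Prop)
    (hle : IsElimOrderToDeg G d le) (hht : DHeightLE le k)
    (A : Set V) (hA : A = {v | ¬ IsLeMaximal le v}) :
    (IsElimOrder (G.induce A) (fun a b : A => le a.1 b.1) ∧
      HeightLE (fun a b : A => le a.1 b.1) k) ∧
    (∀ v ∈ Aᶜ, degreeIn G Aᶜ v ≤ d) ∧
    (∀ C : Set V, IsCompOf G Aᶜ C → ∀ u ∈ A, ∀ v ∈ A, ¬ le u v → ¬ le v u →
      (∀ x ∈ C, ¬ G.Adj u x) ∨ (∀ x ∈ C, ¬ G.Adj v x)) := by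
  have hAnonmax : ∀ a ∈ A, ¬ IsLeMaximal le a := by simp [hA]
  have hAcmax : ∀ a ∈ Aᶜ, IsLeMaximal le a := by simp [hA]
  refine ⟨⟨hle.isElimOrder_induce hAnonmax, hht.heightLE_subtype hAnonmax⟩,
    fun v hv => hle.degreeIn_le hAcmax (hAcmax v hv), ?_⟩
  rintro C ⟨-, hCA, hconn, -⟩ u hu v hv huv hvu
  by_contra! ⟨⟨x, hx, hux⟩, ⟨y, hy, hvy⟩⟩
  rcases hle.le_or_le_of_adj_connected (fun c hc => hAcmax c (hCA hc)) hconn hx hy hux hvy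
    (hAnonmax u hu) (hAnonmax v hv) with h | h
  exacts [huv h, hvu h]
end

section
/- Let G be a finite simple graph, A ⊆ V(G), and ≤_A an elimination order of the induced subgraph G[A] of height at most k, such that: (1) the induced subgraph of G on V(G) ∖ A has maximum degree at most d; and (2) for every connected component of the induced subgraph on V(G) ∖ A with vertex set C, and all ≤_A-incomparable u, v ∈ A, at least one of E_G(u, C) and E_G(v, C) is empty. Then ≤_A can be extended to a tree order ≤ on V(G) in which every vertex of V(G) ∖ A is ≤-maximal and which is an elimination order to degree d for G of d-height at most k. -/
open SimpleGraph Set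

variable {V : Type*}

/-!
Keep `≤_A` on `A` and put each vertex `v ∉ A` directly above the down-closure of the set
of vertices of `A` adjacent to the component of `G - A` containing `v`. Hypothesis (2) makes
that set a chain, so its down-closure is a chain and the result is a tree order. Edges inside
`A` are comparable because `≤_A` is an elimination order, an edge from `a ∈ A` to `v ∉ A` puts
`a` below `v`, and edges inside `V(G) ∖ A` join maximal vertices lying above the same chain, at
most `d` of them at each vertex. Only vertices of `A` are non-maximal, so the `d`-height is at
most `k`.
-/

section DownClosure

variable {α : Type*} (le : α → α → Prop)

def downClosure (s : Set α) : Set α := {a | ∃ b ∈ s, le a b}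

variable {le}

theorem IsTreeOrder.mem_downClosure_of_le (h : IsTreeOrder le) {s : Set α} {a b : α}
    (hab : le a b) (hb : b ∈ downClosure le s) : a ∈ downClosure le s :=
  let ⟨c, hc, hbc⟩ := hb
  ⟨c, hc, h.trans _ _ _ hab hbc⟩

theorem IsTreeOrder.isChainOf_downClosure (h : IsTreeOrder le) {s : Set α}
    (hs : IsChainOf le s) : IsChainOf le (downClosure le s) := by
  rintro a ⟨b, hb, hab⟩ c ⟨b', hb', hcb'⟩
  rcases hs b hb b' hb' with hbb' | hb'b
  · exact h.downLinear b' a c (h.trans _ _ _ hab hbb') hcb'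
  · exact h.downLinear b a c hab (h.trans _ _ _ hcb' hb'b)

end DownClosure

section ExtendOrder

variable {A : Set V} (leA : A → A → Prop) (D : V → Set A)

def extendOrder (u v : V) : Prop :=
  u = v ∨ (∃ (hu : u ∈ A) (hv : v ∈ A), leA ⟨u, hu⟩ ⟨v, hv⟩) ∨
    ∃ hu : u ∈ A, v ∉ A ∧ ⟨u, hu⟩ ∈ D v

theorem extendOrder_val_of_le {a b : A} (h : leA a b) : extendOrder leA D a b :=
  Or.inr (Or.inl ⟨a.2, b.2, h⟩)

theorem extendOrder_val_of_mem {a : A} {v : V} (hv : v ∉ A) (ha : a ∈ D v) :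
    extendOrder leA D a v :=
  Or.inr (Or.inr ⟨a.2, hv, ha⟩)

theorem extendOrder_val_iff (hrefl : ∀ a, leA a a) (a b : A) :
    extendOrder leA D a b ↔ leA a b := by
  refine ⟨?_, extendOrder_val_of_le leA D⟩
  rintro (hab | ⟨_, _, hab⟩ | ⟨-, hb, -⟩)
  · exact Subtype.ext hab ▸ hrefl a
  · exact hab
  · exact absurd b.2 hb

theorem isLeMaximal_extendOrder {v : V} (hv : v ∉ A) : IsLeMaximal (extendOrder leA D) v := by
  rintro w (rfl | ⟨hv', -⟩ | ⟨hv', -⟩) <;> first | rfl | exact absurd hv' hv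

theorem extendOrder_iff_of_notMem {u v : V} (hv : v ∉ A) :
    extendOrder leA D u v ↔ u = v ∨ ∃ hu : u ∈ A, ⟨u, hu⟩ ∈ D v := by
  constructor
  · rintro (huv | ⟨-, hv', -⟩ | ⟨hu, -, huv⟩)
    exacts [Or.inl huv, absurd hv' hv, Or.inr ⟨hu, huv⟩]
  · rintro (huv | ⟨hu, huv⟩)
    exacts [Or.inl huv, extendOrder_val_of_mem leA D hv huv]

theorem setOf_extendOrder_ne_of_notMem {v : V} (hv : v ∉ A) :
    {w | extendOrder leA D w v ∧ w ≠ v} = Subtype.val '' D v := by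
  ext w
  simp only [mem_ofPred_eq, extendOrder_iff_of_notMem leA D hv, mem_image]
  constructor
  · rintro ⟨hwv | ⟨hw, hwv⟩, hne⟩
    exacts [absurd hwv hne, ⟨⟨w, hw⟩, hwv, rfl⟩]
  · rintro ⟨a, ha, rfl⟩
    exact ⟨Or.inr ⟨a.2, ha⟩, fun h => hv (h ▸ a.2)⟩

theorem isTreeOrder_extendOrder (h : IsTreeOrder leA)
    (hdown : ∀ v ∉ A, ∀ a b, leA a b → b ∈ D v → a ∈ D v)
    (hchain : ∀ v ∉ A, IsChainOf leA (D v)) : IsTreeOrder (extendOrder leA D) where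
  refl _ := Or.inl rfl
  antisymm := by
    rintro a b (rfl | ⟨ha, hb, hab⟩ | ⟨-, hb, -⟩) hba
    · rfl
    · rcases hba with rfl | ⟨_, _, hba⟩ | ⟨-, hna, -⟩
      · rfl
      · exact congrArg Subtype.val (h.antisymm _ _ hab hba)
      · exact absurd ha hna
    · exact isLeMaximal_extendOrder leA D hb a hba
  trans := by
    rintro a b c hab (rfl | ⟨hb, hc, hbc⟩ | ⟨hb, hc, hbc⟩)
    · exact hab
    · rcases hab with rfl | ⟨ha, _, hab⟩ | ⟨-, hnb, -⟩
      · exact extendOrder_val_of_le leA D hbc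
      · exact extendOrder_val_of_le leA D (h.trans _ _ _ hab hbc)
      · exact absurd hb hnb
    · rcases hab with rfl | ⟨ha, _, hab⟩ | ⟨-, hnb, -⟩
      · exact extendOrder_val_of_mem leA D hc hbc
      · exact extendOrder_val_of_mem leA D hc (hdown c hc _ _ hab hbc)
      · exact absurd hb hnb
  downLinear := by
    intro a b c hba hca
    by_cases ha : a ∈ A
    · rcases hba with rfl | ⟨hb, _, hba⟩ | ⟨-, hna, -⟩
      · exact Or.inr hca
      rcases hca with rfl | ⟨hc, _, hca⟩ | ⟨-, hna, -⟩
      · exact Or.inl (extendOrder_val_of_le leA D hba)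
      · exact (h.downLinear ⟨a, ha⟩ ⟨b, hb⟩ ⟨c, hc⟩ hba hca).imp
          (extendOrder_val_of_le leA D) (extendOrder_val_of_le leA D)
      all_goals exact absurd ha hna
    · rw [extendOrder_iff_of_notMem leA D ha] at hba hca
      rcases hba with rfl | ⟨hb, hba⟩
      · exact Or.inr ((extendOrder_iff_of_notMem leA D ha).2 hca)
      rcases hca with rfl | ⟨hc, hca⟩
      · exact Or.inl (extendOrder_val_of_mem leA D ha hba)
      · exact (hchain a ha _ hba _ hca).imp
          (extendOrder_val_of_le leA D) (extendOrder_val_of_le leA D)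

theorem dHeightLE_extendOrder (hrefl : ∀ a, leA a a) {k : ℕ} (h : HeightLE leA k) :
    DHeightLE (extendOrder leA D) k := by
  intro s hs
  set le := extendOrder leA D
  have hnonmax : {v ∈ s | ¬ IsLeMaximal le v} =
      Subtype.val '' {a : A | a.1 ∈ s ∧ ¬ IsLeMaximal le a} := by
    ext v
    constructor
    · rintro ⟨hvs, hv⟩
      have hvA : v ∈ A := by_contra fun hvA => hv (isLeMaximal_extendOrder leA D hvA)
      exact ⟨⟨v, hvA⟩, ⟨hvs, hv⟩, rfl⟩
    · rintro ⟨a, ha, rfl⟩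
      exact ha
  rw [hnonmax, ncard_image_of_injective _ Subtype.val_injective]
  refine h _ fun a ha b hb => ?_
  simpa only [le, extendOrder_val_iff leA D hrefl] using hs a ha.1 b hb.1

variable (G : SimpleGraph V) {leA D}

theorem sset_extendOrder_of_mem (h : IsElimOrder (G.induce A) leA)
    (hD : ∀ (a : A) v, v ∉ A → G.Adj a v → a ∈ D v) {v : V} (hv : v ∈ A) :
    Sset G (extendOrder leA D) v = ∅ := by
  refine eq_empty_iff_forall_notMem.2 fun u ⟨hadj, hnuv, hnvu⟩ => ?_
  by_cases hu : u ∈ A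
  · rcases h.2 ⟨u, hu⟩ ⟨v, hv⟩ hadj with huv | hvu
    exacts [hnuv (extendOrder_val_of_le leA D huv), hnvu (extendOrder_val_of_le leA D hvu)]
  · exact hnvu (extendOrder_val_of_mem leA D hu (hD ⟨v, hv⟩ u hu hadj.symm))

theorem sset_extendOrder_of_notMem (hD : ∀ (a : A) v, v ∉ A → G.Adj a v → a ∈ D v)
    {v : V} (hv : v ∉ A) : Sset G (extendOrder leA D) v = Aᶜ ∩ G.neighborSet v := by
  ext u
  simp only [Sset, mem_ofPred_eq, mem_inter_iff, mem_compl_iff, mem_neighborSet]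
  constructor
  · rintro ⟨hadj, hnuv, -⟩
    exact ⟨fun hu => hnuv (extendOrder_val_of_mem leA D hv (hD ⟨u, hu⟩ v hv hadj)),
      hadj.symm⟩
  · rintro ⟨hu, hadj⟩
    exact ⟨hadj.symm, fun h => hadj.ne (isLeMaximal_extendOrder leA D hu v h),
      fun h => hadj.ne (isLeMaximal_extendOrder leA D hv u h).symm⟩

theorem isElimOrderToDeg_extendOrder {d : ℕ} (h : IsElimOrder (G.induce A) leA)
    (hdown : ∀ v ∉ A, ∀ a b, leA a b → b ∈ D v → a ∈ D v)
    (hchain : ∀ v ∉ A, IsChainOf leA (D v))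
    (hD : ∀ (a : A) v, v ∉ A → G.Adj a v → a ∈ D v)
    (hDadj : ∀ u v, u ∉ A → v ∉ A → G.Adj u v → D u = D v)
    (hdeg : ∀ v ∉ A, degreeIn G Aᶜ v ≤ d) : IsElimOrderToDeg G d (extendOrder leA D) := by
  refine ⟨isTreeOrder_extendOrder leA D h.1 hdown hchain, fun v => ?_⟩
  by_cases hv : v ∈ A
  · exact Or.inl (sset_extendOrder_of_mem G h hD hv)
  refine Or.inr ⟨isLeMaximal_extendOrder leA D hv, ?_, fun u hu => ?_⟩
  · rw [sset_extendOrder_of_notMem G hD hv]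
    exact hdeg v hv
  · rw [sset_extendOrder_of_notMem G hD hv] at hu
    obtain ⟨hu, hadj⟩ := hu
    rw [setOf_extendOrder_ne_of_notMem leA D hu, setOf_extendOrder_ne_of_notMem leA D hv,
      hDadj u v hu hv hadj.symm]

end ExtendOrder

section Components

variable (G : SimpleGraph V) (B : Set V)

def compOf (v : V) : Set V :=
  {x | ∃ (hx : x ∈ B) (hv : v ∈ B), (G.induce B).Reachable ⟨x, hx⟩ ⟨v, hv⟩}

variable {G B}

theorem mem_compOf_self {v : V} (hv : v ∈ B) : v ∈ compOf G B v := ⟨hv, hv, .refl _⟩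

theorem compOf_eq_of_adj {u v : V} (hu : u ∈ B) (hv : v ∈ B) (h : G.Adj u v) :
    compOf G B u = compOf G B v := by
  have huv : (G.induce B).Adj ⟨u, hu⟩ ⟨v, hv⟩ := h
  ext x
  constructor
  · rintro ⟨hx, _, hxu⟩
    exact ⟨hx, hv, hxu.trans huv.reachable⟩
  · rintro ⟨hx, _, hxv⟩
    exact ⟨hx, hu, hxv.trans huv.symm.reachable⟩

theorem reachable_induce_compOf {v : V} {a b : B} (p : (G.induce B).Walk a b)
    (ha : a.1 ∈ compOf G B v) (hb : b.1 ∈ compOf G B v) :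
    (G.induce (compOf G B v)).Reachable ⟨a, ha⟩ ⟨b, hb⟩ := by
  induction p with
  | nil => rfl
  | @cons a c b hac p ih =>
    obtain ⟨-, hv, hbv⟩ := hb
    have hc : c.1 ∈ compOf G B v := ⟨c.2, hv, .trans ⟨p⟩ hbv⟩
    have hac' : (G.induce (compOf G B v)).Adj ⟨a, ha⟩ ⟨c, hc⟩ := hac
    exact hac'.reachable.trans (ih hc _)

theorem isCompOf_compOf {v : V} (hv : v ∈ B) : IsCompOf G B (compOf G B v) := by
  have hvC := mem_compOf_self (G := G) hv
  refine ⟨⟨v, hvC⟩, fun x hx => hx.1, ?_, fun C hCC hCB hC => ?_⟩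
  · rw [connected_iff_exists_forall_reachable]
    refine ⟨⟨v, hvC⟩, fun ⟨x, hx⟩ => ?_⟩
    obtain ⟨_, _, ⟨p⟩⟩ := id hx
    exact (reachable_induce_compOf p hx hvC).symm
  · refine Subset.antisymm (fun x hx => ?_) hCC
    exact ⟨hCB hx, hv,
      (hC.preconnected ⟨x, hx⟩ ⟨v, hCC hvC⟩).map (G.induceHomOfLE hCB).toHom⟩

end Components

section Attachments

variable (G : SimpleGraph V) (A : Set V)

def attachments (v : V) : Set A := {b | ∃ x ∈ compOf G Aᶜ v, G.Adj b x}

variable {G A}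

theorem mem_attachments_of_adj {a : A} {v : V} (hv : v ∉ A) (h : G.Adj a v) :
    a ∈ attachments G A v :=
  ⟨v, mem_compOf_self hv, h⟩

theorem attachments_eq_of_adj {u v : V} (hu : u ∉ A) (hv : v ∉ A) (h : G.Adj u v) :
    attachments G A u = attachments G A v := by
  rw [attachments, attachments, compOf_eq_of_adj hu hv h]

theorem isChainOf_attachments {leA : A → A → Prop}
    (h : ∀ C : Set V, IsCompOf G Aᶜ C → ∀ u v : A, ¬ leA u v → ¬ leA v u →
      (∀ x ∈ C, ¬ G.Adj u.1 x) ∨ (∀ x ∈ C, ¬ G.Adj v.1 x))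
    {v : V} (hv : v ∉ A) : IsChainOf leA (attachments G A v) := by
  rintro a ⟨x, hx, hax⟩ b ⟨y, hy, hby⟩
  by_contra! hab
  rcases h _ (isCompOf_compOf hv) a b hab.1 hab.2 with ha | hb
  exacts [ha x hx hax, hb y hy hby]

end Attachments

theorem extend_elimOrder_to_deg_general {V : Type*} (G : SimpleGraph V)
    (d k : ℕ) (A : Set V) (leA : A → A → Prop)
    (h1 : IsElimOrder (G.induce A) leA) (h2 : HeightLE leA k)
    (h3 : ∀ v ∈ Aᶜ, degreeIn G Aᶜ v ≤ d)
    (h4 : ∀ C : Set V, IsCompOf G Aᶜ C → ∀ u v : A, ¬ leA u v → ¬ leA v u →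
      (∀ x ∈ C, ¬ G.Adj u.1 x) ∨ (∀ x ∈ C, ¬ G.Adj v.1 x)) :
    ∃ le : V → V → Prop, (∀ a b : A, le a.1 b.1 ↔ leA a b) ∧
      (∀ v ∉ A, IsLeMaximal le v) ∧
      IsElimOrderToDeg G d le ∧ DHeightLE le k := by
  set D : V → Set A := fun v => downClosure leA (attachments G A v)
  have hdown : ∀ v ∉ A, ∀ a b, leA a b → b ∈ D v → a ∈ D v :=
    fun _ _ _ _ hab => h1.1.mem_downClosure_of_le hab
  have hchain : ∀ v ∉ A, IsChainOf leA (D v) :=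
    fun _ hv => h1.1.isChainOf_downClosure (isChainOf_attachments h4 hv)
  have hD : ∀ (a : A) v, v ∉ A → G.Adj a v → a ∈ D v :=
    fun a _ hv h => ⟨a, mem_attachments_of_adj hv h, h1.1.refl a⟩
  have hDadj : ∀ u v, u ∉ A → v ∉ A → G.Adj u v → D u = D v := fun _ _ hu hv h => by
    simp only [D, attachments_eq_of_adj hu hv h]
  exact ⟨extendOrder leA D, extendOrder_val_iff leA D h1.1.refl,
    fun _ => isLeMaximal_extendOrder leA D,
    isElimOrderToDeg_extendOrder G h1 hdown hchain hD hDadj h3,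
    dHeightLE_extendOrder leA D h1.1.refl h2⟩

/-- If `leA` is an elimination order of `G[A]` of height at most `k` such that
`G − A` has maximum degree at most `d` and each component of `G − A` sees at most
one branch of `leA`, then `leA` extends to a tree order on `V(G)` in which every
vertex outside `A` is maximal and which is an elimination order to degree `d`
for `G` of `d`-height at most `k`. -/
theorem extend_elimOrder_to_deg {V : Type*} [Fintype V] (G : SimpleGraph V)
    (d k : ℕ) (A : Set V) (leA : A → A → Prop)
    (h1 : IsElimOrder (G.induce A) leA) (h2 : HeightLE leA k)
    (h3 : ∀ v ∈ Aᶜ, degreeIn G Aᶜ v ≤ d)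
    (h4 : ∀ C : Set V, IsCompOf G Aᶜ C → ∀ u v : A, ¬ leA u v → ¬ leA v u →
      (∀ x ∈ C, ¬ G.Adj u.1 x) ∨ (∀ x ∈ C, ¬ G.Adj v.1 x)) :
    ∃ le : V → V → Prop, (∀ a b : A, le a.1 b.1 ↔ leA a b) ∧
      (∀ v ∉ A, IsLeMaximal le v) ∧
      IsElimOrderToDeg G d le ∧ DHeightLE le k :=
  extend_elimOrder_to_deg_general G d k A leA h1 h2 h3 h4
end

section
/- Let G be a finite simple graph and ≤ an elimination order to degree d for G of d-height at most k, with non-maximal subgraph H. Then every vertex of G of degree greater than k+d belongs to V(H). -/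
open SimpleGraph Set

variable {V : Type*}

/-! A maximal vertex has no neighbour above it, so its neighbours are either below it, forming a
chain of non-maximal vertices (at most `k` of them), or incomparable to it (at most `d`). -/

section

variable {le : V → V → Prop}

theorem IsTreeOrder.isChainOf_of_forall_le (h : IsTreeOrder le) {s : Set V} {v : V}
    (hs : ∀ u ∈ s, le u v) : IsChainOf le s :=
  fun a ha b hb => h.downLinear v a b (hs a ha) (hs b hb)

theorem not_isLeMaximal_of_le_of_ne {u v : V} (huv : le u v) (hne : u ≠ v) :
    ¬ IsLeMaximal le u :=
  fun hu => hne (hu v huv).symm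

theorem DHeightLE.ncard_le_of_forall_not_isLeMaximal {k : ℕ} (h : DHeightLE le k) {s : Set V}
    (hs : IsChainOf le s) (hmax : ∀ u ∈ s, ¬ IsLeMaximal le u) : s.ncard ≤ k := by
  simpa only [Set.sep_eq_self_iff_mem_true.mpr hmax] using h s hs

theorem IsElimOrderToDeg.ncard_Sset_le {G : SimpleGraph V} {d : ℕ} (h : IsElimOrderToDeg G d le)
    (v : V) : (Sset G le v).ncard ≤ d := by
  rcases h.2 v with hempty | ⟨-, hd, -⟩
  · simp [hempty]
  · exact hd

theorem neighborSet_eq_union_Sset_of_isLeMaximal (G : SimpleGraph V) {v : V}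
    (hv : IsLeMaximal le v) : G.neighborSet v = {u ∈ G.neighborSet v | le u v} ∪ Sset G le v := by
  ext u
  refine ⟨fun hu => ?_, ?_⟩
  · by_cases huv : le u v
    · exact Or.inl ⟨hu, huv⟩
    · exact Or.inr ⟨hu.symm, huv, fun hvu => G.ne_of_adj hu (hv u hvu).symm⟩
  · rintro (hu | hu)
    · exact hu.1
    · exact hu.1.symm

end

theorem highDeg_nonmaximal_general {V : Type*} (G : SimpleGraph V) (d k : ℕ)
    (le : V → V → Prop) (hle : IsElimOrderToDeg G d le) (hht : DHeightLE le k) :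
    ∀ v : V, k + d < gdeg G v → ¬ IsLeMaximal le v := by
  intro v hdeg hmax
  set below : Set V := {u ∈ G.neighborSet v | le u v}
  have hbelow : below.ncard ≤ k :=
    hht.ncard_le_of_forall_not_isLeMaximal (hle.1.isChainOf_of_forall_le fun u hu => hu.2)
      fun u hu => not_isLeMaximal_of_le_of_ne hu.2 (G.ne_of_adj hu.1).symm
  have : gdeg G v ≤ k + d :=
    calc gdeg G v = (below ∪ Sset G le v).ncard := by
          rw [gdeg, ← neighborSet_eq_union_Sset_of_isLeMaximal G hmax]
      _ ≤ below.ncard + (Sset G le v).ncard := Set.ncard_union_le _ _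
      _ ≤ k + d := add_le_add hbelow (hle.ncard_Sset_le v)
  omega

/-- If `le` is an elimination order to degree `d` for `G` of `d`-height at most `k`,
then every vertex of degree greater than `k + d` is non-maximal, i.e. belongs to the
non-maximal subgraph. -/
theorem highDeg_nonmaximal {V : Type*} [Fintype V] (G : SimpleGraph V) (d k : ℕ)
    (le : V → V → Prop) (hle : IsElimOrderToDeg G d le) (hht : DHeightLE le k) :
    ∀ v : V, k + d < gdeg G v → ¬ IsLeMaximal le v :=
  highDeg_nonmaximal_general G d k le hle hht
end
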